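/- arXiv:0906.1391 — 2 statements merged into one kernel-verified Lean document; each statement's English description precedes it below -/
import Mathlib

section
/- Let Z = m_1P_1 + ⋯ + m_sP_s be a fat point scheme in ℙⁿ×ℙᵐ. If Z is arithmetically Cohen–Macaulay, then there exist a bihomogeneous form L of degree (1,0) and a bihomogeneous form L' of degree (0,1) whose images in R/I_Z form a regular sequence of length two on R/I_Z. -/
/-!
Formalization of statements from "Separators of fat points in ℙⁿ×ℙᵐ"
(Guardo–Van Tuyl).  The bigraded coordinate ring `R = k[x₀,…,xₙ,y₀,…,y_m]` of
`ℙⁿ×ℙᵐ` is modelled as `MvPolynomial (Fin (n+1) ⊕ Fin (m+1)) k`, where the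
variable `X (Sum.inl i)` is `xᵢ` (degree `(1,0)`) and `X (Sum.inr j)` is `yⱼ`
(degree `(0,1)`); bihomogeneity is weighted homogeneity for the weight `biWeight`.
-/

open MvPolynomial

noncomputable section

/-- The ℕ²-graded coordinate ring `R` of `ℙⁿ×ℙᵐ`. -/
abbrev BiRing (k : Type) [Field k] (n m : ℕ) : Type :=
  MvPolynomial (Fin (n + 1) ⊕ Fin (m + 1)) k

/-- The weight function on the variables giving the ℕ²-grading:
`deg xᵢ = (1,0)` and `deg yⱼ = (0,1)`. -/
def biWeight (n m : ℕ) : Fin (n + 1) ⊕ Fin (m + 1) → ℕ × ℕ :=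
  Sum.elim (fun _ => (1, 0)) (fun _ => (0, 1))

variable {k : Type} [Field k] {n m : ℕ}

/-- `F` is bihomogeneous of degree `d ∈ ℕ²`. -/
def BihomOfDeg (F : BiRing k n m) (d : ℕ × ℕ) : Prop :=
  IsWeightedHomogeneous (biWeight n m) F d

/-- `I` is the defining (prime) ideal of a point of `ℙⁿ×ℙᵐ`: it is generated by
`n` linear forms of degree `(1,0)` and `m` linear forms of degree `(0,1)` which
are linearly independent (so that they cut out a single point of `ℙⁿ×ℙᵐ`). -/
def IsPointIdeal (I : Ideal (BiRing k n m)) : Prop :=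
  ∃ (L : Fin n → BiRing k n m) (L' : Fin m → BiRing k n m),
    (∀ a, BihomOfDeg (L a) (1, 0)) ∧ (∀ b, BihomOfDeg (L' b) (0, 1)) ∧
    LinearIndependent k (Sum.elim L L') ∧
    I = Ideal.span (Set.range L ∪ Set.range L')

/-- The defining ideal `I_Z = I_{P₁}^{m₁} ∩ ⋯ ∩ I_{P_s}^{m_s}` of the fat point
scheme `Z = m₁P₁ + ⋯ + m_sP_s`. -/
def fatIdeal {s : ℕ} (P : Fin s → Ideal (BiRing k n m)) (mult : Fin s → ℕ) :
    Ideal (BiRing k n m) :=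
  ⨅ j, P j ^ mult j

/-- `f, g` is a regular sequence of length two on `R/I`: the class of `f` is a
nonzero-divisor on `R/I`, the class of `g` is a nonzero-divisor on `R/(I,f)`,
and `R/(I,f,g) ≠ 0`. -/
def IsRegularPair (I : Ideal (BiRing k n m)) (f g : BiRing k n m) : Prop :=
  (∀ h, f * h ∈ I → h ∈ I) ∧
  (∀ h, g * h ∈ I ⊔ Ideal.span {f} → h ∈ I ⊔ Ideal.span {f}) ∧
  I ⊔ Ideal.span {f, g} ≠ ⊤

/-- The fat point scheme with ideal `I` is arithmetically Cohen–Macaulay (ACM),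
i.e. `depth R/I_Z = dim R/I_Z = 2`.  Since `dim R/I_Z = 2` always holds for a
(nonempty) fat point scheme and `depth ≤ dim`, this is equivalent to the
existence of a regular sequence of length two on `R/I_Z` contained in the
irrelevant maximal ideal `(x₀,…,xₙ,y₀,…,y_m)` (= polynomials with zero constant
term). -/
def IsACM (I : Ideal (BiRing k n m)) : Prop :=
  ∃ f g : BiRing k n m,
    constantCoeff f = 0 ∧ constantCoeff g = 0 ∧ IsRegularPair I f g

/-!
Since `k` is infinite, there are forms `L` of degree `(1,0)` and `L'` of degree `(0,1)` that
vanish at none of the points: `L` avoids the span of the `(1,0)`-generators of every `I_{P_j}`,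
and `L'` that of the `(0,1)`-generators. For each point, these generators together with `L` and
`L'` form a basis of the linear forms, so after a linear change of coordinates `I_{P_j}` is
generated by variables and `L` is one more variable; hence `L` is a nonzerodivisor modulo every
`I_{P_j}^{m_j}`, so modulo `I_Z`. A prime containing `I_Z`, `L` and `L'` contains some `I_{P_j}`,
hence all variables, hence the regular sequence `f, g` witnessing that `Z` is ACM. But an
associated prime of `R/(I_Z, L)` cannot contain a regular sequence of `R/I_Z` when `L` is regular
on `R/I_Z`; so `L'` lies in no associated prime of `R/(I_Z, L)`.
-/

theorem Ideal.exists_iInf_pow_le_of_ne_top {R ι : Type*} [CommSemiring R] {P : ι → Ideal R}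
    {e : ι → ℕ} (h : ⨅ i, P i ^ e i ≠ ⊤) : ∃ j, ⨅ i, P i ^ e i ≤ P j := by
  by_contra! hle
  refine h (iInf_eq_top.mpr fun j => ?_)
  rw [show e j = 0 from by_contra fun hj => hle j ((iInf_le _ j).trans (Ideal.pow_le_self hj)),
    pow_zero, Ideal.one_eq_top]

theorem Ideal.IsPrime.exists_le_of_iInf_pow_le {R ι : Type*} [CommSemiring R] [Fintype ι]
    {P : ι → Ideal R} {e : ι → ℕ} {Q : Ideal R} (hQ : Q.IsPrime) (h : ⨅ i, P i ^ e i ≤ Q) :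
    ∃ j, P j ≤ Q := by
  obtain ⟨j, -, hj⟩ := hQ.inf_le' (s := Finset.univ) (f := fun i => P i ^ e i) |>.mp
    (by rwa [Finset.inf_univ_eq_iInf])
  exact ⟨j, hQ.le_of_pow_le hj⟩

section Ideal

variable {R : Type*} [CommRing R]

theorem Ideal.mem_sup_span_singleton_of_mul_mem {I : Ideal R} {f g L h : R}
    (hf : ∀ z, f * z ∈ I → z ∈ I)
    (hg : ∀ z, g * z ∈ I ⊔ Ideal.span {f} → z ∈ I ⊔ Ideal.span {f})
    (hL : ∀ z, L * z ∈ I → z ∈ I)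
    (hfh : f * h ∈ I ⊔ Ideal.span {L}) (hgh : g * h ∈ I ⊔ Ideal.span {L}) :
    h ∈ I ⊔ Ideal.span {L} := by
  simp only [sup_comm I, Ideal.mem_span_singleton_sup] at hg hfh hgh ⊢
  obtain ⟨a, i₁, hi₁, hfh⟩ := hfh
  obtain ⟨c, i₂, hi₂, hgh⟩ := hgh
  obtain ⟨d, i₃, hi₃, ha⟩ : ∃ d, ∃ i₃ ∈ I, d * f + i₃ = a := by
    refine hg a ⟨c, g * a - c * f, hL _ ?_, by ring⟩
    have : L * (g * a - c * f) = f * i₂ - g * i₁ := by linear_combination g * hfh - f * hgh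
    rw [this]
    exact I.sub_mem (I.mul_mem_left _ hi₂) (I.mul_mem_left _ hi₁)
  refine ⟨d, h - d * L, hf _ ?_, by ring⟩
  have : f * (h - d * L) = i₃ * L + i₁ := by linear_combination -hfh - L * ha
  rw [this]
  exact I.add_mem (I.mul_mem_right _ hi₃) hi₁

theorem Ideal.mem_bot_colon_mk_iff {J : Ideal R} {r h : R} :
    r ∈ (⊥ : Submodule R (R ⧸ J)).colon {Ideal.Quotient.mk J h} ↔ r * h ∈ J := by
  rw [Submodule.mem_colon_singleton, Submodule.mem_bot, Algebra.smul_def,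
    Ideal.Quotient.algebraMap_eq, ← map_mul, Ideal.Quotient.eq_zero_iff_mem]

theorem IsAssociatedPrime.le_of_quotient {J Q : Ideal R} (hQ : IsAssociatedPrime Q (R ⧸ J)) :
    J ≤ Q := by
  simpa [Submodule.annihilator_top, Ideal.annihilator_quotient] using hQ.annihilator_le

theorem Ideal.mem_of_mul_mem_of_notMem_associatedPrimes [IsNoetherianRing R] {J : Ideal R}
    {x h : R} (hx : ∀ Q ∈ associatedPrimes R (R ⧸ J), x ∉ Q) (hxh : x * h ∈ J) : h ∈ J := by
  by_contra hh
  obtain ⟨Q, hQ, hle⟩ := exists_le_isAssociatedPrime_of_isNoetherianRing R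
    (Ideal.Quotient.mk J h) (by rwa [ne_eq, Ideal.Quotient.eq_zero_iff_mem])
  exact hx Q hQ (hle (Ideal.mem_bot_colon_mk_iff.mpr hxh))

theorem Ideal.span_pair_not_le_of_isAssociatedPrime [IsNoetherianRing R] {I : Ideal R}
    {f g L : R} (hf : ∀ z, f * z ∈ I → z ∈ I)
    (hg : ∀ z, g * z ∈ I ⊔ Ideal.span {f} → z ∈ I ⊔ Ideal.span {f})
    (hL : ∀ z, L * z ∈ I → z ∈ I) {Q : Ideal R}
    (hQ : IsAssociatedPrime Q (R ⧸ (I ⊔ Ideal.span {L}))) : ¬ Ideal.span {f, g} ≤ Q := by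
  intro hfg
  obtain ⟨hprime, x, rfl⟩ := isAssociatedPrime_iff.mp hQ
  obtain ⟨h, rfl⟩ := Ideal.Quotient.mk_surjective x
  have hh := Ideal.mem_sup_span_singleton_of_mul_mem hf hg hL
    (Ideal.mem_bot_colon_mk_iff.mp (hfg (Ideal.subset_span (by simp))))
    (Ideal.mem_bot_colon_mk_iff.mp (hfg (Ideal.subset_span (by simp))))
  rw [← Ideal.Quotient.eq_zero_iff_mem] at hh
  exact hprime.ne_top (by simp [hh])

end Ideal

theorem Submodule.exists_mem_forall_notMem_span {K V : Type*} [Field K] [Infinite K]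
    [AddCommGroup V] [Module K V] {W : Submodule K V} {a s : ℕ} {u : Fin (a + 1) → V}
    (hu : LinearIndependent K u) (huW : ∀ i, u i ∈ W) (v : Fin s → Fin a → V) :
    ∃ x ∈ W, ∀ j, x ∉ Submodule.span K (Set.range (v j)) := by
  by_contra! hcover
  obtain ⟨j, hj⟩ := Subspace.exists_eq_top_of_iUnion_eq_univ
    (p := fun j => (Submodule.span K (Set.range (v j))).comap W.subtype)
    (Set.eq_univ_of_forall fun x => Set.mem_iUnion.mpr (hcover x x.2))
  have hle : Submodule.span K (Set.range u) ≤ Submodule.span K (Set.range (v j)) :=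
    Submodule.span_le.mpr <| Set.range_subset_iff.mpr fun i =>
      Submodule.comap_subtype_eq_top.mp hj (huW i)
  have := FiniteDimensional.span_of_finite K (Set.finite_range (v j))
  have := (Submodule.finrank_mono hle).trans (finrank_range_le_card (v j))
  rw [finrank_span_eq_card hu] at this
  simp at this

namespace MvPolynomial

section CommSemiring

variable {σ R : Type*} [CommSemiring R]

theorem disjoint_weightedHomogeneousSubmodule {M : Type*} [AddCommMonoid M] (w : σ → M)
    {d e : M} (hde : d ≠ e) :
    Disjoint (weightedHomogeneousSubmodule R w d) (weightedHomogeneousSubmodule R w e) := by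
  refine Submodule.disjoint_def.mpr fun p hd he => ?_
  by_contra hp
  exact hde (IsWeightedHomogeneous.inj_right hp hd he)

theorem mem_idealOfVars_of_constantCoeff_eq_zero {p : MvPolynomial σ R}
    (hp : constantCoeff p = 0) : p ∈ idealOfVars σ R := by
  rw [← pow_one (idealOfVars σ R), mem_pow_idealOfVars_iff]
  intro d hd
  rw [Nat.one_le_iff_ne_zero, Ne, Finsupp.degree_eq_zero_iff]
  rintro rfl
  exact mem_support_iff.mp hd hp

theorem idealOfVars_ne_top [Nontrivial R] : idealOfVars σ R ≠ ⊤ := by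
  rw [Ne, Ideal.eq_top_iff_one, ← pow_one (idealOfVars σ R), ← C_1, C_mem_pow_idealOfVars_iff]
  simp

theorem IsHomogeneous.mem_idealOfVars {p : MvPolynomial σ R} (hp : IsHomogeneous p 1) :
    p ∈ idealOfVars σ R := by
  have : p ∈ homogeneousSubmodule σ R 1 := hp
  rw [homogeneousSubmodule_one_eq_span_X] at this
  exact Submodule.span_le_restrictScalars R _ _ this

open scoped Pointwise in
theorem span_X_image_pow (S : Set σ) (r : ℕ) :
    Ideal.span (X '' S : Set (MvPolynomial σ R)) ^ r =
      Ideal.span ((monomial · 1) '' {d : σ →₀ ℕ | d.degree = r ∧ ↑d.support ⊆ S}) := by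
  rw [Ideal.span, Submodule.span_pow, Finsupp.image_pow_eq_finsuppProd_image]
  simp [monomial_eq]

theorem mem_span_monomial_of_X_mul_mem {D : Set (σ →₀ ℕ)} {t : σ} (hD : ∀ d ∈ D, d t = 0)
    {p : MvPolynomial σ R} (h : X t * p ∈ Ideal.span ((monomial · (1 : R)) '' D)) :
    p ∈ Ideal.span ((monomial · (1 : R)) '' D) := by
  classical
  rw [mem_ideal_span_monomial_image] at h ⊢
  intro d hd
  obtain ⟨e, he, hle⟩ := h (Finsupp.single t 1 + d) (by
    rwa [mem_support_iff, coeff_X_mul, ← mem_support_iff])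
  refine ⟨e, he, fun i => ?_⟩
  by_cases hi : i = t
  · simp [hi, hD e he]
  · simpa [Finsupp.single_eq_of_ne hi] using hle i

theorem mem_span_X_image_pow_of_X_mul_mem {S : Set σ} {t : σ} (ht : t ∉ S) {r : ℕ}
    {p : MvPolynomial σ R} (h : X t * p ∈ Ideal.span (X '' S) ^ r) :
    p ∈ Ideal.span (X '' S) ^ r := by
  rw [span_X_image_pow] at h ⊢
  refine mem_span_monomial_of_X_mul_mem (fun d hd => ?_) h
  exact Finsupp.notMem_support_iff.mp fun hmem => ht (hd.2 hmem)

end CommSemiring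

variable {σ κ K : Type*} [Field K]

variable (σ K) in
def basisX : Module.Basis σ K (homogeneousSubmodule σ K 1) :=
  (Module.Basis.span (linearIndependent_X σ K)).map
    (LinearEquiv.ofEq _ _ homogeneousSubmodule_one_eq_span_X.symm)

theorem coe_basisX (i : σ) : (basisX σ K i : MvPolynomial σ K) = X i := by
  simp [basisX, Module.Basis.span_apply]

theorem exists_basis_coe_eq [Fintype σ] {H : σ → MvPolynomial σ K}
    (hH : ∀ i, IsHomogeneous (H i) 1) (hli : LinearIndependent K H) :
    ∃ b : Module.Basis σ K (homogeneousSubmodule σ K 1), ∀ i, (b i : MvPolynomial σ K) = H i := by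
  let H' : σ → homogeneousSubmodule σ K 1 := fun i => ⟨H i, hH i⟩
  have hli' : LinearIndependent K H' := .of_comp (Submodule.subtype _) hli
  have hcard : Fintype.card σ = Module.finrank K (homogeneousSubmodule σ K 1) :=
    (Module.finrank_eq_card_basis (basisX σ K)).symm
  have := Module.Finite.of_basis (basisX σ K)
  exact ⟨basisOfLinearIndependentOfCardEqFinrank' H' hli' hcard, fun i => by simp [H']⟩

-- Both rings are the symmetric algebra of the linear forms, presented by two different bases.
theorem exists_algEquiv_X_eq (b : Module.Basis κ K (homogeneousSubmodule σ K 1)) :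
    ∃ Φ : MvPolynomial κ K ≃ₐ[K] MvPolynomial σ K, ∀ i, Φ (X i) = b i := by
  have hι : ∀ v, SymmetricAlgebra.equivMvPolynomial (basisX σ K)
      (SymmetricAlgebra.ι K (homogeneousSubmodule σ K 1) v) = (v : MvPolynomial σ K) := by
    refine LinearMap.congr_fun ((basisX σ K).ext (f₁ := (SymmetricAlgebra.equivMvPolynomial
      (basisX σ K)).toLinearMap ∘ₗ SymmetricAlgebra.ι K _) (f₂ := Submodule.subtype _)
      fun i => ?_)
    simp [coe_basisX]
  exact ⟨(SymmetricAlgebra.equivMvPolynomial b).symm.trans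
    (SymmetricAlgebra.equivMvPolynomial (basisX σ K)), fun i => by simp [hι]⟩

theorem X_mem_span_basis (b : Module.Basis κ K (homogeneousSubmodule σ K 1)) (i : σ) :
    X i ∈ Submodule.span K (Set.range fun j => (b j : MvPolynomial σ K)) := by
  have := Submodule.mem_map_of_mem (f := Submodule.subtype _) (b.mem_span (basisX σ K i))
  rwa [Submodule.map_span, ← Set.range_comp, Submodule.subtype_apply, coe_basisX] at this

theorem span_range_basis_eq_idealOfVars (b : Module.Basis κ K (homogeneousSubmodule σ K 1)) :
    Ideal.span (Set.range fun i => (b i : MvPolynomial σ K)) = idealOfVars σ K := by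
  refine le_antisymm (Ideal.span_le.mpr <| Set.range_subset_iff.mpr fun i =>
    IsHomogeneous.mem_idealOfVars (b i).2) (Ideal.span_le.mpr <| Set.range_subset_iff.mpr fun i =>
    Submodule.span_le_restrictScalars K _ _ (X_mem_span_basis b i))

theorem mem_span_basis_image_pow_of_mul_mem (b : Module.Basis κ K (homogeneousSubmodule σ K 1))
    {S : Set κ} {t : κ} (ht : t ∉ S) {r : ℕ} {p : MvPolynomial σ K}
    (h : (b t : MvPolynomial σ K) * p ∈
      Ideal.span ((fun i => (b i : MvPolynomial σ K)) '' S) ^ r) :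
    p ∈ Ideal.span ((fun i => (b i : MvPolynomial σ K)) '' S) ^ r := by
  obtain ⟨Φ, hΦ⟩ := exists_algEquiv_X_eq b
  have hspan : Ideal.span ((fun i => (b i : MvPolynomial σ K)) '' S) =
      (Ideal.span (X '' S)).map Φ := by
    rw [Ideal.map_span, Set.image_image]
    simp_rw [hΦ]
  rw [hspan, ← Ideal.map_pow, Ideal.mem_map_of_equiv] at h ⊢
  obtain ⟨q, hq, hqp⟩ := h
  refine ⟨Φ.symm p, mem_span_X_image_pow_of_X_mul_mem ht ?_, Φ.apply_symm_apply p⟩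
  convert hq using 1
  apply Φ.injective
  rw [map_mul, hΦ, Φ.apply_symm_apply, hqp]

end MvPolynomial

theorem BihomOfDeg.isHomogeneous {p : BiRing k n m} {a b : ℕ} (hp : BihomOfDeg p (a, b)) :
    IsHomogeneous p (a + b) := by
  intro d hd
  have hw : Finsupp.weight 1 d =
      (Finsupp.weight (biWeight n m) d).1 + (Finsupp.weight (biWeight n m) d).2 := by
    simp only [Finsupp.weight_eq_sum, Prod.fst_sum, Prod.snd_sum, ← Finset.sum_add_distrib]
    refine Finset.sum_congr rfl fun i _ => ?_
    cases i <;> simp [biWeight]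
  rw [hw, hp hd]

section PointFrame

variable {Lx : Fin n → BiRing k n m} {Ly : Fin m → BiRing k n m} {L L' : BiRing k n m}

theorem exists_basis_sumElim_snoc (hx : ∀ a, BihomOfDeg (Lx a) (1, 0))
    (hy : ∀ b, BihomOfDeg (Ly b) (0, 1)) (hli : LinearIndependent k (Sum.elim Lx Ly))
    (hL : BihomOfDeg L (1, 0)) (hL' : BihomOfDeg L' (0, 1))
    (hLx : L ∉ Submodule.span k (Set.range Lx)) (hLy : L' ∉ Submodule.span k (Set.range Ly)) :
    ∃ b : Module.Basis (Fin (n + 1) ⊕ Fin (m + 1)) k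
        (homogeneousSubmodule (Fin (n + 1) ⊕ Fin (m + 1)) k 1),
      ∀ i, (b i : BiRing k n m) = Sum.elim (Fin.snoc Lx L) (Fin.snoc Ly L') i := by
  have hx' : ∀ i, BihomOfDeg ((Fin.snoc Lx L : Fin (n + 1) → BiRing k n m) i) (1, 0) := by
    intro i
    induction i using Fin.lastCases with
    | last => simpa using hL
    | cast a => simpa using hx a
  have hy' : ∀ i, BihomOfDeg ((Fin.snoc Ly L' : Fin (m + 1) → BiRing k n m) i) (0, 1) := by
    intro i
    induction i using Fin.lastCases with
    | last => simpa using hL'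
    | cast b => simpa using hy b
  refine exists_basis_coe_eq (fun i => ?_) ?_
  · rcases i with i | i
    · exact (hx' i).isHomogeneous
    · exact (hy' i).isHomogeneous
  rw [linearIndependent_sum] at hli ⊢
  refine ⟨linearIndependent_finSnoc.mpr ⟨hli.1, hLx⟩,
    linearIndependent_finSnoc.mpr ⟨hli.2.1, hLy⟩, ?_⟩
  refine (disjoint_weightedHomogeneousSubmodule (R := k) (biWeight n m)
    (d := (1, 0)) (e := (0, 1)) (by simp)).mono ?_ ?_
  · exact Submodule.span_le.mpr (Set.range_subset_iff.mpr hx')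
  · exact Submodule.span_le.mpr (Set.range_subset_iff.mpr hy')

variable {b : Module.Basis (Fin (n + 1) ⊕ Fin (m + 1)) k
  (homogeneousSubmodule (Fin (n + 1) ⊕ Fin (m + 1)) k 1)}

theorem mem_span_union_pow_of_mul_mem
    (hb : ∀ i, (b i : BiRing k n m) = Sum.elim (Fin.snoc Lx L) (Fin.snoc Ly L') i)
    {t : ℕ} {h : BiRing k n m} (hLh : L * h ∈ Ideal.span (Set.range Lx ∪ Set.range Ly) ^ t) :
    h ∈ Ideal.span (Set.range Lx ∪ Set.range Ly) ^ t := by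
  let S : Set (Fin (n + 1) ⊕ Fin (m + 1)) :=
    Set.range (Sum.inl ∘ Fin.castSucc) ∪ Set.range (Sum.inr ∘ Fin.castSucc)
  have hS : (fun i => (b i : BiRing k n m)) '' S = Set.range Lx ∪ Set.range Ly := by
    simp [S, Set.image_union, ← Set.range_comp, Function.comp_def, hb]
  have hL : (b (Sum.inl (Fin.last n)) : BiRing k n m) = L := by simp [hb]
  rw [← hS] at hLh ⊢
  rw [← hL] at hLh
  exact mem_span_basis_image_pow_of_mul_mem b (t := Sum.inl (Fin.last n)) (by simp [S]) hLh

theorem span_union_sup_span_pair_eq_idealOfVars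
    (hb : ∀ i, (b i : BiRing k n m) = Sum.elim (Fin.snoc Lx L) (Fin.snoc Ly L') i) :
    Ideal.span (Set.range Lx ∪ Set.range Ly) ⊔ Ideal.span {L, L'} = idealOfVars _ k := by
  rw [← span_range_basis_eq_idealOfVars b, ← Ideal.span_union]
  congr 1
  simp only [hb, Set.Sum.elim_range, Fin.range_snoc]
  ext
  simp only [Set.mem_union, Set.mem_insert_iff, Set.mem_singleton_iff]
  tauto

end PointFrame

section FatIdeal

variable {s : ℕ} {P : Fin s → Ideal (BiRing k n m)} {mult : Fin s → ℕ} {L L' : BiRing k n m}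

theorem idealOfVars_le_of_fatIdeal_le (hvars : ∀ j, P j ⊔ Ideal.span {L, L'} = idealOfVars _ k)
    {Q : Ideal (BiRing k n m)} (hQ : Q.IsPrime) (hIQ : fatIdeal P mult ≤ Q) (hLQ : L ∈ Q)
    (hL'Q : L' ∈ Q) : idealOfVars _ k ≤ Q := by
  obtain ⟨j, hj⟩ := hQ.exists_le_of_iInf_pow_le hIQ
  rw [← hvars j]
  exact sup_le hj (Ideal.span_le.mpr (by simp [Set.insert_subset_iff, hLQ, hL'Q]))

theorem fatIdeal_sup_span_pair_ne_top (hvars : ∀ j, P j ⊔ Ideal.span {L, L'} = idealOfVars _ k)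
    (hI : fatIdeal P mult ≠ ⊤) : fatIdeal P mult ⊔ Ideal.span {L, L'} ≠ ⊤ := by
  obtain ⟨j, hj⟩ := Ideal.exists_iInf_pow_le_of_ne_top hI
  exact ne_top_of_le_ne_top idealOfVars_ne_top (hvars j ▸ sup_le_sup_right hj _)

end FatIdeal

theorem stmt1_general [CharZero k] {s : ℕ}
    (P : Fin s → Ideal (BiRing k n m)) (mult : Fin s → ℕ)
    (hP : ∀ j, IsPointIdeal (P j))
    (hACM : IsACM (fatIdeal P mult)) :
    ∃ L L' : BiRing k n m,
      BihomOfDeg L (1, 0) ∧ BihomOfDeg L' (0, 1) ∧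
      IsRegularPair (fatIdeal P mult) L L' := by
  obtain ⟨f, g, hf, hg, hfreg, hgreg, hproper⟩ := hACM
  choose Lx Ly hx hy hli hP using hP
  obtain ⟨L, hL, hLx⟩ := Submodule.exists_mem_forall_notMem_span
    (W := weightedHomogeneousSubmodule k (biWeight n m) (1, 0))
    ((linearIndependent_X _ k).comp _ Sum.inl_injective)
    (fun i => isWeightedHomogeneous_X k _ (Sum.inl i)) Lx
  obtain ⟨L', hL', hLy⟩ := Submodule.exists_mem_forall_notMem_span
    (W := weightedHomogeneousSubmodule k (biWeight n m) (0, 1))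
    ((linearIndependent_X _ k).comp _ Sum.inr_injective)
    (fun i => isWeightedHomogeneous_X k _ (Sum.inr i)) Ly
  choose b hb using fun j =>
    exists_basis_sumElim_snoc (hx j) (hy j) (hli j) hL hL' (hLx j) (hLy j)
  have hvars : ∀ j, P j ⊔ Ideal.span {L, L'} = idealOfVars _ k := fun j =>
    hP j ▸ span_union_sup_span_pair_eq_idealOfVars (hb j)
  have hLreg : ∀ h, L * h ∈ fatIdeal P mult → h ∈ fatIdeal P mult := by
    simp only [fatIdeal, Ideal.mem_iInf, hP]
    exact fun h hLh j => mem_span_union_pow_of_mul_mem (hb j) (hLh j)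
  have hfg : Ideal.span {f, g} ≤ idealOfVars _ k := by
    simpa [Ideal.span_le, Set.insert_subset_iff] using
      ⟨mem_idealOfVars_of_constantCoeff_eq_zero hf, mem_idealOfVars_of_constantCoeff_eq_zero hg⟩
  refine ⟨L, L', hL, hL', hLreg, fun h => Ideal.mem_of_mul_mem_of_notMem_associatedPrimes
    fun Q hQ hL'Q => Ideal.span_pair_not_le_of_isAssociatedPrime hfreg hgreg hLreg hQ ?_,
    fatIdeal_sup_span_pair_ne_top hvars (ne_top_of_le_ne_top hproper le_sup_left)⟩
  have hJQ := hQ.le_of_quotient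
  exact hfg.trans (idealOfVars_le_of_fatIdeal_le hvars hQ.isPrime (le_sup_left.trans hJQ)
    (hJQ (Ideal.mem_sup_right (Ideal.mem_span_singleton_self L))) hL'Q)

/-- Lemma 2.1(ii): if the fat point scheme `Z` is ACM, then
there exist a bihomogeneous form `L` of degree `(1,0)` and a bihomogeneous form
`L'` of degree `(0,1)` whose images form a regular sequence of length two on
`R/I_Z`. -/
theorem stmt1 [IsAlgClosed k] [CharZero k] {s : ℕ}
    (P : Fin s → Ideal (BiRing k n m)) (mult : Fin s → ℕ)
    (hP : ∀ j, IsPointIdeal (P j)) (hinj : Function.Injective P)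
    (hmult : ∀ j, 1 ≤ mult j)
    (hACM : IsACM (fatIdeal P mult)) :
    ∃ L L' : BiRing k n m,
      BihomOfDeg L (1, 0) ∧ BihomOfDeg L' (0, 1) ∧
      IsRegularPair (fatIdeal P mult) L L' :=
  stmt1_general P mult hP hACM
end
end

section
/- Let Z = m_1P_1 + ⋯ + m_sP_s be a fat point scheme in ℙⁿ×ℙᵐ, fix i, and let Z' = m_1P_1 + ⋯ + (m_i−1)P_i + ⋯ + m_sP_s. Then there exist finitely many bihomogeneous forms F_1,…,F_p ∈ R, each of which is a separator of P_i of multiplicity m_i, such that the ideal I_{Z'}/I_Z of R/I_Z is generated by the residue classes of F_1,…,F_p. -/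
/-!
Formalization of statements from "Separators of fat points in ℙⁿ×ℙᵐ"
(Guardo–Van Tuyl).  The bigraded coordinate ring `R = k[x₀,…,xₙ,y₀,…,y_m]` of
`ℙⁿ×ℙᵐ` is modelled as `MvPolynomial (Fin (n+1) ⊕ Fin (m+1)) k`, where the
variable `X (Sum.inl i)` is `xᵢ` (degree `(1,0)`) and `X (Sum.inr j)` is `yⱼ`
(degree `(0,1)`); bihomogeneity is weighted homogeneity for the weight `biWeight`.
-/

open MvPolynomial

noncomputable section

variable {k : Type} [Field k] {n m : ℕ}

/-- `F` is a separator of the point `Pᵢ` of multiplicity `mᵢ`, where `IZ = I_Z`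
and `IZ' = I_{Z'}`: a bihomogeneous form lying in `I_{Z'} \ I_Z`
(equivalently `F ∈ I_{Pᵢ}^{mᵢ-1} \ I_{Pᵢ}^{mᵢ}` and `F ∈ I_{Pⱼ}^{mⱼ}` for `j ≠ i`). -/
def IsSeparator (IZ IZ' : Ideal (BiRing k n m)) (F : BiRing k n m) : Prop :=
  (∃ d, BihomOfDeg F d) ∧ F ∈ IZ' ∧ F ∉ IZ

/-- `F₁,…,F_p` is a set of minimal separators of `Pᵢ` of multiplicity `mᵢ`:
each `Fⱼ` is a (bihomogeneous) separator, their residue classes generate the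
ideal `I_{Z'}/I_Z` of `R/I_Z` (equivalently `I_Z + (F₁,…,F_p) = I_{Z'}`), and no
fewer than `p` bihomogeneous forms have classes generating `I_{Z'}/I_Z`. -/
def IsMinSepSet (IZ IZ' : Ideal (BiRing k n m)) {p : ℕ}
    (F : Fin p → BiRing k n m) : Prop :=
  (∀ j, IsSeparator IZ IZ' (F j)) ∧
  IZ ⊔ Ideal.span (Set.range F) = IZ' ∧
  ∀ q : ℕ, q < p → ∀ G : Fin q → BiRing k n m,
    (∀ j, ∃ d, BihomOfDeg (G j) d) → IZ ⊔ Ideal.span (Set.range G) ≠ IZ'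

/-!
`I_{Z'}` is an intersection of powers of homogeneous ideals, hence homogeneous, and `R` is
Noetherian, so `I_{Z'}` is generated by finitely many bihomogeneous forms. Since `I_Z ⊆ I_{Z'}`,
dropping the generators that already lie in `I_Z` leaves forms in `I_{Z'} \ I_Z`, i.e.
separators, which together with `I_Z` still generate `I_{Z'}`.
-/

section Graded

variable {ι σ A : Type*} [DecidableEq ι] [AddMonoid ι] [CommSemiring A] [SetLike σ A]
  [AddSubmonoidClass σ A] (𝒜 : ι → σ) [GradedRing 𝒜]

theorem Ideal.IsHomogeneous.pow {I : Ideal A} (hI : I.IsHomogeneous 𝒜) (t : ℕ) :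
    (I ^ t).IsHomogeneous 𝒜 := by
  induction t with
  | zero => simpa using Ideal.IsHomogeneous.top 𝒜
  | succ t ih => rw [pow_succ]; exact ih.mul hI

theorem Ideal.IsHomogeneous.exists_finset_span_eq [IsNoetherianRing A] {J : Ideal A}
    (hJ : J.IsHomogeneous 𝒜) :
    ∃ T : Finset A, (∀ x ∈ T, SetLike.IsHomogeneousElem 𝒜 x) ∧ Ideal.span (T : Set A) = J := by
  obtain ⟨S, hS⟩ := (Ideal.IsHomogeneous.iff_exists 𝒜 J).mp hJ
  have hFG : (Ideal.span ((↑) '' S : Set A)).FG := hS ▸ IsNoetherian.noetherian J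
  obtain ⟨T, hTS, hspan⟩ := (Submodule.fg_span_iff_fg_span_finset_subset _).mp hFG
  refine ⟨T, fun x hx => ?_, hS ▸ hspan.symm⟩
  obtain ⟨y, -, rfl⟩ := hTS hx
  exact y.2

end Graded

theorem Ideal.sup_span_diff_eq_span {R : Type*} [Semiring R] {I : Ideal R} {T : Set R}
    (hI : I ≤ Ideal.span T) : I ⊔ Ideal.span (T \ I) = Ideal.span T := by
  refine le_antisymm (sup_le hI (Ideal.span_mono Set.sdiff_subset))
    (Ideal.span_le.2 fun x hx => ?_)
  by_cases hxI : x ∈ I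
  · exact Ideal.mem_sup_left hxI
  · exact Ideal.mem_sup_right (Ideal.subset_span ⟨hx, hxI⟩)

section FatPoints

attribute [local instance] MvPolynomial.weightedGradedAlgebra

local notation "𝒜" => weightedHomogeneousSubmodule k (biWeight n m)

theorem isHomogeneousElem_iff_exists_bihomOfDeg {F : BiRing k n m} :
    SetLike.IsHomogeneousElem 𝒜 F ↔ ∃ d, BihomOfDeg F d := by
  simp only [SetLike.IsHomogeneousElem, mem_weightedHomogeneousSubmodule, BihomOfDeg]

theorem IsPointIdeal.isHomogeneous {I : Ideal (BiRing k n m)} (h : IsPointIdeal I) :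
    I.IsHomogeneous 𝒜 := by
  obtain ⟨L, L', hL, hL', -, rfl⟩ := h
  refine Ideal.homogeneous_span 𝒜 _ fun x hx => isHomogeneousElem_iff_exists_bihomOfDeg.2 ?_
  rcases hx with ⟨a, rfl⟩ | ⟨b, rfl⟩
  · exact ⟨(1, 0), hL a⟩
  · exact ⟨(0, 1), hL' b⟩

theorem fatIdeal_isHomogeneous {s : ℕ} {P : Fin s → Ideal (BiRing k n m)}
    (hP : ∀ j, IsPointIdeal (P j)) (mult : Fin s → ℕ) : (fatIdeal P mult).IsHomogeneous 𝒜 :=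
  Ideal.IsHomogeneous.iInf fun j => (hP j).isHomogeneous.pow 𝒜 _

theorem fatIdeal_antitone {s : ℕ} (P : Fin s → Ideal (BiRing k n m)) :
    Antitone (fatIdeal P) :=
  fun _ _ h => iInf_mono fun j => Ideal.pow_le_pow_right (h j)

theorem fatIdeal_exists_finset_bihom_span_eq {s : ℕ} {P : Fin s → Ideal (BiRing k n m)}
    (hP : ∀ j, IsPointIdeal (P j)) (mult : Fin s → ℕ) :
    ∃ T : Finset (BiRing k n m), (∀ F ∈ T, ∃ d, BihomOfDeg F d) ∧
      Ideal.span (T : Set (BiRing k n m)) = fatIdeal P mult := by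
  obtain ⟨T, hT, hspan⟩ := (fatIdeal_isHomogeneous hP mult).exists_finset_span_eq 𝒜
  exact ⟨T, fun F hF => isHomogeneousElem_iff_exists_bihomOfDeg.1 (hT F hF), hspan⟩

end FatPoints

theorem stmt3_general {s : ℕ}
    (P : Fin s → Ideal (BiRing k n m)) (mult : Fin s → ℕ)
    (hP : ∀ j, IsPointIdeal (P j)) (i : Fin s)
    (IZ IZ' : Ideal (BiRing k n m))
    (hIZ : IZ = fatIdeal P mult)
    (hIZ' : IZ' = fatIdeal P (Function.update mult i (mult i - 1))) :
    ∃ (p : ℕ) (F : Fin p → BiRing k n m),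
      (∀ j, IsSeparator IZ IZ' (F j)) ∧
      IZ ⊔ Ideal.span (Set.range F) = IZ' := by
  have hle : IZ ≤ IZ' := hIZ ▸ hIZ' ▸
    fatIdeal_antitone P (update_le_self_iff.2 (Nat.sub_le _ _))
  obtain ⟨T, hTbihom, hTspan⟩ := fatIdeal_exists_finset_bihom_span_eq hP
    (Function.update mult i (mult i - 1))
  rw [← hIZ'] at hTspan
  obtain ⟨p, F, hF⟩ := ((T : Set (BiRing k n m)) \ IZ).toFinite.fin_embedding
  refine ⟨p, F, fun j => ?_, ?_⟩
  · obtain ⟨hjT, hjIZ⟩ : F j ∈ (T : Set (BiRing k n m)) \ IZ := hF ▸ Set.mem_range_self j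
    exact ⟨hTbihom _ hjT, hTspan ▸ Ideal.subset_span hjT, hjIZ⟩
  · rw [hF, ← hTspan]
    exact Ideal.sup_span_diff_eq_span (hTspan ▸ hle)

/-- Lemma 3.3: for `Z' ⊆ Z` as in Convention 3.1 there exist
finitely many bihomogeneous forms `F₁,…,F_p`, each a separator of `Pᵢ` of
multiplicity `mᵢ`, whose residue classes generate the ideal `I_{Z'}/I_Z` of
`R/I_Z`. -/
theorem stmt3 [IsAlgClosed k] [CharZero k] {s : ℕ}
    (P : Fin s → Ideal (BiRing k n m)) (mult : Fin s → ℕ)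
    (hP : ∀ j, IsPointIdeal (P j)) (hinj : Function.Injective P)
    (hmult : ∀ j, 1 ≤ mult j) (i : Fin s)
    (IZ IZ' : Ideal (BiRing k n m))
    (hIZ : IZ = fatIdeal P mult)
    (hIZ' : IZ' = fatIdeal P (Function.update mult i (mult i - 1))) :
    ∃ (p : ℕ) (F : Fin p → BiRing k n m),
      (∀ j, IsSeparator IZ IZ' (F j)) ∧
      IZ ⊔ Ideal.span (Set.range F) = IZ' :=
  stmt3_general P mult hP i IZ IZ' hIZ hIZ'
end
end
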